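/- arXiv:2503.02306 — 2 statements merged into one kernel-verified Lean document; each statement's English description precedes it below -/
import Mathlib

section
/- Let I be an open real interval, ω ∈ ℝ, q : I → ℝ, and q̂ : ℝ → ℝ. Suppose λ : I → ℝ is three times differentiable with λ'(t) > 0 for all t ∈ I and satisfies the generalized Kummer equation ω²q(t) − q̂(λ(t))(λ'(t))² + (3/4)(λ''(t)/λ'(t))² − (1/2)(λ'''(t)/λ'(t)) = 0 on I. If z : ℝ → ℝ is twice differentiable and satisfies z''(x) + q̂(x)z(x) = 0 for all x ∈ ℝ, then the function y(t) = z(λ(t))/√(λ'(t)) is twice differentiable on I and satisfies y''(t) + ω²q(t)y(t) = 0 for all t ∈ I. -/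
open Set

/-- The Liouville transformation `y(t) = z(λ(t))/√(λ'(t))` carries solutions of
`z'' + q̂·z = 0` to solutions of `y'' + ω²q·y = 0` when `λ` satisfies the
generalized Kummer equation. -/
theorem liouville_transformation
    (a b ω : ℝ) (q qhat : ℝ → ℝ)
    (lam lam' lam'' lam''' : ℝ → ℝ)
    (hlam : ∀ t ∈ Ioo a b, HasDerivAt lam (lam' t) t)
    (hlam' : ∀ t ∈ Ioo a b, HasDerivAt lam' (lam'' t) t)
    (hlam'' : ∀ t ∈ Ioo a b, HasDerivAt lam'' (lam''' t) t)
    (hpos : ∀ t ∈ Ioo a b, 0 < lam' t)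
    (hkummer : ∀ t ∈ Ioo a b,
      ω ^ 2 * q t - qhat (lam t) * (lam' t) ^ 2
        + 3 / 4 * (lam'' t / lam' t) ^ 2 - 1 / 2 * (lam''' t / lam' t) = 0)
    (z z' z'' : ℝ → ℝ)
    (hz : ∀ x, HasDerivAt z (z' x) x)
    (hz' : ∀ x, HasDerivAt z' (z'' x) x)
    (hode : ∀ x, z'' x + qhat x * z x = 0)
    (y : ℝ → ℝ) (hy : ∀ t, y t = z (lam t) / Real.sqrt (lam' t)) :
    ∃ y' y'' : ℝ → ℝ, ∀ t ∈ Ioo a b,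
      HasDerivAt y (y' t) t ∧ HasDerivAt y' (y'' t) t ∧
      y'' t + ω ^ 2 * q t * y t = 0 := by
  refine ⟨fun t => z' (lam t) * Real.sqrt (lam' t)
      - z (lam t) * lam'' t / (2 * (Real.sqrt (lam' t))^3),
    fun t => z'' (lam t) * (Real.sqrt (lam' t))^3
      + z (lam t) * (3/4 * (lam'' t)^2 / (Real.sqrt (lam' t))^5
        - 1/2 * lam''' t / (Real.sqrt (lam' t))^3), fun t ht => ?_⟩
  have hp := hpos t ht
  have hds : HasDerivAt (fun u => Real.sqrt (lam' u)) (lam'' t / (2 * Real.sqrt (lam' t))) t :=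
    (hlam' t ht).sqrt hp.ne'
  have hdz : HasDerivAt (fun u => z (lam u)) (z' (lam t) * lam' t) t :=
    (hz (lam t)).comp t (hlam t ht)
  have hdz' : HasDerivAt (fun u => z' (lam u)) (z'' (lam t) * lam' t) t :=
    (hz' (lam t)).comp t (hlam t ht)
  have hk := hkummer t ht
  have ho := hode (lam t)
  obtain ⟨S, hS⟩ : ∃ S, Real.sqrt (lam' t) = S := ⟨_, rfl⟩
  have hsp : 0 < S := hS ▸ Real.sqrt_pos.mpr hp
  have hsne : S ≠ 0 := hsp.ne'
  have hsne0 : Real.sqrt (lam' t) ≠ 0 := by rw [hS]; exact hsne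
  have hs2 : lam' t = S ^ 2 := by rw [← hS]; exact (Real.sq_sqrt hp.le).symm
  rw [hs2] at hdz hdz' hk
  have hy1 : HasDerivAt y (z' (lam t) * S - z (lam t) * lam'' t / (2 * S^3)) t := by
    have hyf : y = fun u => z (lam u) / Real.sqrt (lam' u) := funext hy
    rw [hyf]
    have h := hdz.div hds hsne0
    refine h.congr_deriv ?_
    rw [hS]
    field_simp
  have hy2 : HasDerivAt (fun u => z' (lam u) * Real.sqrt (lam' u)
        - z (lam u) * lam'' u / (2 * (Real.sqrt (lam' u))^3))
      (z'' (lam t) * S^3 + z (lam t) * (3/4 * (lam'' t)^2 / S^5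
        - 1/2 * lam''' t / S^3)) t := by
    have h1 := hdz'.mul hds
    have hN := hdz.mul (hlam'' t ht)
    have hD := (hds.pow 3).const_mul 2
    have hDne0 : 2 * (Real.sqrt (lam' t))^3 ≠ 0 := by
      rw [hS]; positivity
    have h := h1.sub (hN.div hD hDne0)
    refine h.congr_deriv ?_
    simp only [Pi.mul_apply, Pi.pow_apply]
    rw [hS]
    field_simp
    ring
  refine ⟨?_, ?_, ?_⟩
  · show HasDerivAt y (z' (lam t) * Real.sqrt (lam' t)
        - z (lam t) * lam'' t / (2 * (Real.sqrt (lam' t))^3)) t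
    rw [hS]; exact hy1
  · show HasDerivAt (fun u => z' (lam u) * Real.sqrt (lam' u)
          - z (lam u) * lam'' u / (2 * (Real.sqrt (lam' u))^3))
        (z'' (lam t) * (Real.sqrt (lam' t))^3
          + z (lam t) * (3/4 * (lam'' t)^2 / (Real.sqrt (lam' t))^5
            - 1/2 * lam''' t / (Real.sqrt (lam' t))^3)) t
    rw [hS]; exact hy2
  · show z'' (lam t) * (Real.sqrt (lam' t))^3
        + z (lam t) * (3/4 * (lam'' t)^2 / (Real.sqrt (lam' t))^5
          - 1/2 * lam''' t / (Real.sqrt (lam' t))^3) + ω ^ 2 * q t * y t = 0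
    rw [hy t, hS]
    field_simp at hk ⊢
    linear_combination z (lam t) * hk + 8 * S ^ 8 * ho
end

section
/- Let [a,b] be a real interval, t₀ ∈ [a,b], ω ∈ ℝ, and q : [a,b] → ℝ. Suppose w : [a,b] → ℝ is twice differentiable and satisfies w''(t) − (w'(t))² + exp(4w(t))·∫_{t₀}^t exp(2w(s)) ds − ω²q(t) = 0 for all t ∈ [a,b]. Then the function γ(t) = ∫_{t₀}^t exp(2w(s)) ds is three times differentiable on [a,b], γ'(t) = exp(2w(t)) > 0, and γ satisfies the Airy–Kummer equation ω²q(t) − γ(t)(γ'(t))² + (3/4)(γ''(t)/γ'(t))² − (1/2)(γ'''(t)/γ'(t)) = 0 for all t ∈ [a,b]. -/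
/-!
With `γ' = e^{2w}` one gets `γ''/γ' = 2w'` and `γ'''/γ' = 2w'' + 4w'²`, so the Airy–Kummer
expression equals `-(w'' - w'² + e^{4w}γ - ω²q)`, which vanishes by hypothesis.
-/

open Set

theorem hasDerivWithinAt_intervalIntegral_Icc {E : Type*} [NormedAddCommGroup E]
    [NormedSpace ℝ E] [CompleteSpace E] {f : ℝ → E} {a b t₀ t : ℝ}
    (hf : ContinuousOn f (Icc a b)) (ht₀ : t₀ ∈ Icc a b) (ht : t ∈ Icc a b) :
    HasDerivWithinAt (fun u => ∫ s in t₀..u, f s) (f t) (Icc a b) t := by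
  -- enables the `FTCFilter t (𝓝[Icc a b] t) (𝓝[Icc a b] t)` instance
  have : Fact (t ∈ Icc a b) := ⟨ht⟩
  exact intervalIntegral.integral_hasDerivWithinAt_right
    ((hf.mono (uIcc_subset_Icc ht₀ ht)).intervalIntegrable)
    (hf.stronglyMeasurableAtFilter_nhdsWithin measurableSet_Icc t) (hf t ht)

theorem HasDerivWithinAt.exp_two_mul {w : ℝ → ℝ} {w' t : ℝ} {s : Set ℝ}
    (hw : HasDerivWithinAt w w' s t) :
    HasDerivWithinAt (fun u => Real.exp (2 * w u)) (2 * w' * Real.exp (2 * w t)) s t := by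
  simpa only [mul_comm] using (hw.const_mul 2).exp

theorem airyKummer_expr_eq_neg (c γ e w₁ w₂ : ℝ) (he : e ≠ 0) :
    c - γ * e ^ 2 + 3 / 4 * (2 * w₁ * e / e) ^ 2 - 1 / 2 * ((2 * w₂ + 4 * w₁ ^ 2) * e / e)
      = -(w₂ - w₁ ^ 2 + e ^ 2 * γ - c) := by
  field_simp
  ring

/-- If `w` solves `w'' − (w')² + e^{4w}·∫_{t₀}^t e^{2w} − ω²q = 0` on `[a,b]`, then
`γ(t) = ∫_{t₀}^t e^{2w(s)} ds` is an Airy phase function: it is three times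
differentiable, has positive derivative `γ' = e^{2w}`, and satisfies the
Airy–Kummer equation. -/
theorem airy_kummer_from_w
    (a b t₀ ω : ℝ) (ht₀ : t₀ ∈ Set.Icc a b)
    (q : ℝ → ℝ)
    (w w' w'' : ℝ → ℝ)
    (hw : ∀ t ∈ Set.Icc a b, HasDerivWithinAt w (w' t) (Set.Icc a b) t)
    (hw' : ∀ t ∈ Set.Icc a b, HasDerivWithinAt w' (w'' t) (Set.Icc a b) t)
    (heq : ∀ t ∈ Set.Icc a b,
      w'' t - (w' t) ^ 2
        + Real.exp (4 * w t) * (∫ s in t₀..t, Real.exp (2 * w s))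
        - ω ^ 2 * q t = 0)
    (γ : ℝ → ℝ)
    (hγ : ∀ t, γ t = ∫ s in t₀..t, Real.exp (2 * w s)) :
    ∃ γ₁ γ₂ γ₃ : ℝ → ℝ, ∀ t ∈ Set.Icc a b,
      HasDerivWithinAt γ (γ₁ t) (Set.Icc a b) t ∧
      HasDerivWithinAt γ₁ (γ₂ t) (Set.Icc a b) t ∧
      HasDerivWithinAt γ₂ (γ₃ t) (Set.Icc a b) t ∧
      γ₁ t = Real.exp (2 * w t) ∧ 0 < γ₁ t ∧
      ω ^ 2 * q t - γ t * (γ₁ t) ^ 2 + 3 / 4 * (γ₂ t / γ₁ t) ^ 2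
        - 1 / 2 * (γ₃ t / γ₁ t) = 0 := by
  have hw_cont : ContinuousOn (fun t => Real.exp (2 * w t)) (Icc a b) := fun t ht =>
    ((hw t ht).exp_two_mul).continuousWithinAt
  refine ⟨fun t => Real.exp (2 * w t), fun t => 2 * w' t * Real.exp (2 * w t),
    fun t => (2 * w'' t + 4 * w' t ^ 2) * Real.exp (2 * w t), fun t ht => ?_⟩
  have hγ_deriv : HasDerivWithinAt γ (Real.exp (2 * w t)) (Icc a b) t := by
    rw [funext hγ]
    exact hasDerivWithinAt_intervalIntegral_Icc hw_cont ht₀ ht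
  have hγ₂_deriv : HasDerivWithinAt (fun t => 2 * w' t * Real.exp (2 * w t))
      ((2 * w'' t + 4 * w' t ^ 2) * Real.exp (2 * w t)) (Icc a b) t :=
    (((hw' t ht).const_mul 2).mul (hw t ht).exp_two_mul).congr_deriv (by ring)
  refine ⟨hγ_deriv, (hw t ht).exp_two_mul, hγ₂_deriv, rfl, Real.exp_pos _, ?_⟩
  have hexp4 : Real.exp (4 * w t) = Real.exp (2 * w t) ^ 2 := by
    rw [← Real.exp_nat_mul]; ring_nf
  rw [airyKummer_expr_eq_neg _ _ _ _ _ (Real.exp_pos _).ne', ← hexp4, hγ, heq t ht, neg_zero]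
end
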